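/- Let H ⊂ V' with V a Hilbert space, suppose B : V × V → V' is bilinear, antisymmetric (⟨B(v₁,v₂),v₃⟩ = −⟨B(v₁,v₃),v₂⟩), and satisfies |⟨B(v₁,v₂),v₃⟩| ≤ C₀ ‖v₁‖ ‖v₂‖ |v₃|^{1/2} ‖v₃‖^{1/2} for all v₁,v₂,v₃ ∈ V (‖·‖ the V-norm, |·| the H-norm). Then for any u, v ∈ V and any ε > 0, |⟨B(u,u) − B(v,v), u − v⟩| ≤ ε ‖u − v‖² + (C₀⁴ / (ε³)) · c ‖u‖⁴ |u − v|² for some absolute constant c. -/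

import Mathlib

/-!
Antisymmetry kills `B v (u - v) (u - v)`, so with `w = u - v` the difference
`B u u w - B v v w` collapses to `B w u w`. The interpolation bound controls this by
`C₀ ‖u‖ |w|^{1/2} ‖w‖^{3/2}`, and Young's inequality with exponents `4` and `4/3` splits
it into `ε ‖w‖²` plus `(27/256) C₀⁴ ‖u‖⁴ |w|² / ε³`.
-/

theorem young_mul_pow_three_le {a x ε : ℝ} (ha : 0 ≤ a) (hx : 0 ≤ x) (hε : 0 < ε) :
    a * x ^ 3 ≤ ε * x ^ 4 + 27 / 256 * a ^ 4 / ε ^ 3 := by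
  have hgap : ε * x ^ 4 + 27 / 256 * a ^ 4 / ε ^ 3 - a * x ^ 3 =
      (4 * (ε * x) - 3 * a) ^ 2 * (16 * (ε * x) ^ 2 + 8 * a * (ε * x) + 3 * a ^ 2) /
        (256 * ε ^ 3) := by
    field_simp
    ring
  rw [← sub_nonneg, hgap]
  positivity

section Antisymmetric

variable {V : Type*} [NormedAddCommGroup V] [NormedSpace ℝ V]
  {B : V →L[ℝ] V →L[ℝ] StrongDual ℝ V}

theorem apply_self_eq_zero_of_antisymm (hanti : ∀ v₁ v₂ v₃ : V, B v₁ v₂ v₃ = - B v₁ v₃ v₂)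
    (x y : V) : B x y y = 0 := by
  linarith [hanti x y y]

theorem apply_apply_sub_sub_eq_of_antisymm
    (hanti : ∀ v₁ v₂ v₃ : V, B v₁ v₂ v₃ = - B v₁ v₃ v₂) (u v : V) :
    B u u (u - v) - B v v (u - v) = B (u - v) u (u - v) := by
  have hvanish := apply_self_eq_zero_of_antisymm hanti v (u - v)
  simp only [map_sub, sub_apply] at hvanish ⊢
  linarith

end Antisymmetric

/-- Key uniqueness estimate: under antisymmetry and the interpolation bound
`|⟨B(v₁,v₂),v₃⟩| ≤ C₀‖v₁‖‖v₂‖|v₃|^{1/2}‖v₃‖^{1/2}`, for all `u, v` and `ε > 0`,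
`|⟨B(u,u) - B(v,v), u-v⟩| ≤ ε‖u-v‖² + (C₀⁴/ε³)·c·‖u‖⁴|u-v|²`. -/
theorem stmt7 {V : Type*} [NormedAddCommGroup V] [InnerProductSpace ℝ V]
    (N : V → ℝ) (hN : ∀ x, 0 ≤ N x)
    (B : V →L[ℝ] V →L[ℝ] StrongDual ℝ V)
    (hanti : ∀ v₁ v₂ v₃ : V, B v₁ v₂ v₃ = - B v₁ v₃ v₂)
    (C₀ : ℝ) (hC₀ : 0 ≤ C₀)
    (hB : ∀ v₁ v₂ v₃ : V, |B v₁ v₂ v₃| ≤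
      C₀ * ‖v₁‖ * ‖v₂‖ * (N v₃) ^ ((1 : ℝ) / 2) * ‖v₃‖ ^ ((1 : ℝ) / 2)) :
    ∃ c > (0 : ℝ), ∀ (u v : V) (ε : ℝ), 0 < ε →
      |B u u (u - v) - B v v (u - v)| ≤
        ε * ‖u - v‖ ^ 2 + (C₀ ^ 4 / ε ^ 3) * c * ‖u‖ ^ 4 * (N (u - v)) ^ 2 := by
  refine ⟨27 / 256, by norm_num, fun u v ε hε => ?_⟩
  rw [apply_apply_sub_sub_eq_of_antisymm hanti]
  set w := u - v
  have hsqN : √(N w) ^ 2 = N w := Real.sq_sqrt (hN w)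
  have hsqw : √‖w‖ ^ 2 = ‖w‖ := Real.sq_sqrt (norm_nonneg w)
  have hinterp : |B w u w| ≤ C₀ * ‖u‖ * √(N w) * √‖w‖ ^ 3 := by
    have := hB w u w
    rw [← Real.sqrt_eq_rpow, ← Real.sqrt_eq_rpow] at this
    calc |B w u w| ≤ C₀ * ‖w‖ * ‖u‖ * √(N w) * √‖w‖ := this
      _ = C₀ * ‖u‖ * √(N w) * √‖w‖ ^ 3 := by
        linear_combination (-(C₀ * ‖u‖ * √(N w) * √‖w‖)) * hsqw
  calc |B w u w| ≤ C₀ * ‖u‖ * √(N w) * √‖w‖ ^ 3 := hinterp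
    _ ≤ ε * √‖w‖ ^ 4 + 27 / 256 * (C₀ * ‖u‖ * √(N w)) ^ 4 / ε ^ 3 :=
      young_mul_pow_three_le (by positivity) (by positivity) hε
    _ = ε * ‖w‖ ^ 2 + C₀ ^ 4 / ε ^ 3 * (27 / 256) * ‖u‖ ^ 4 * N w ^ 2 := by
      linear_combination ε * (√‖w‖ ^ 2 + ‖w‖) * hsqw +
        27 / 256 * C₀ ^ 4 * ‖u‖ ^ 4 / ε ^ 3 * (√(N w) ^ 2 + N w) * hsqN
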